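/- Let Φ be a completely positive linear map between matrix algebras. Then for any positive definite matrix A and arbitrary matrix K, Φ(K)* Φ(A)⁻¹ Φ(K) ≤ Φ(K* A⁻¹ K), provided Φ(A) is positive definite. -/

import Mathlib

open Matrix
open scoped ComplexOrder Classical

/-- Square root of a positive semidefinite matrix, extended by `0`. -/
noncomputable def msqrt {n : Type*} [Fintype n] [DecidableEq n] (A : Matrix n n ℂ) :
    Matrix n n ℂ :=
  if h : A.PosSemidef then
    h.1.eigenvectorUnitary.1 * diagonal ((↑) ∘ Real.sqrt ∘ h.1.eigenvalues) *
      (star h.1.eigenvectorUnitary : Matrix n n ℂ) else 0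

/-- Real power of a Hermitian matrix via the functional calculus, extended by `0`. -/
noncomputable def mrpow {n : Type*} [Fintype n] [DecidableEq n] (A : Matrix n n ℂ) (α : ℝ) :
    Matrix n n ℂ :=
  if h : A.IsHermitian then h.cfc (fun t => t ^ α) else 0

/-- A completely positive linear map between matrix algebras (Choi–Kraus form). -/
def IsCPMap {n m : Type*} [Fintype n] [Fintype m] (Φ : Matrix n n ℂ → Matrix m m ℂ) : Prop :=
  ∃ (r : ℕ) (C : Fin r → Matrix n m ℂ), ∀ X, Φ X = ∑ i, (C i)ᴴ * X * C i

/-- The matrix geometric mean `A^{1/2} (A^{-1/2} B A^{-1/2})^{1/2} A^{1/2}`. -/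
noncomputable def geomMean {n : Type*} [Fintype n] [DecidableEq n] (A B : Matrix n n ℂ) :
    Matrix n n ℂ :=
  msqrt A * msqrt ((msqrt A)⁻¹ * B * (msqrt A)⁻¹) * msqrt A

/-- The weighted geometric mean `B^{1/2} (B^{-1/2} A B^{-1/2})^α B^{1/2}`. -/
noncomputable def wgeomMean {n : Type*} [Fintype n] [DecidableEq n] (α : ℝ)
    (A B : Matrix n n ℂ) : Matrix n n ℂ :=
  msqrt B * mrpow ((msqrt B)⁻¹ * A * (msqrt B)⁻¹) α * msqrt B

/-- The harmonic mean `2 (A⁻¹ + B⁻¹)⁻¹`. -/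
noncomputable def harmMean {n : Type*} [Fintype n] [DecidableEq n] (A B : Matrix n n ℂ) :
    Matrix n n ℂ :=
  (2 : ℂ) • (A⁻¹ + B⁻¹)⁻¹

/-!
For `A > 0` the block matrix `[[A, K], [K*, K* A⁻¹ K]]` is positive semidefinite,
its Schur complement being `0`. A completely positive map is in particular `2`-positive: applied
entrywise, each Kraus term is a congruence by the block-diagonal matrix `diag(Cᵢ, Cᵢ)`. So
`[[Φ A, Φ K], [(Φ K)*, Φ (K* A⁻¹ K)]]` is positive semidefinite, and since `Φ A > 0` its Schur
complement `Φ (K* A⁻¹ K) - (Φ K)* (Φ A)⁻¹ Φ K` is positive semidefinite.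
-/

namespace Matrix

variable {ι l m n o α : Type*}

theorem fromBlocks_sum [AddCommMonoid α] (s : Finset ι) (A : ι → Matrix n l α)
    (B : ι → Matrix n m α) (C : ι → Matrix o l α) (D : ι → Matrix o m α) :
    fromBlocks (∑ i ∈ s, A i) (∑ i ∈ s, B i) (∑ i ∈ s, C i) (∑ i ∈ s, D i) =
      ∑ i ∈ s, fromBlocks (A i) (B i) (C i) (D i) := by
  ext (i | i) (j | j) <;> simp [sum_apply]

theorem conjTranspose_mul_fromBlocks_mul_fromBlocks_diag [Fintype n] [Fintype m]
    [NonUnitalSemiring α] [StarRing α] (X : Matrix n m α) (A B C D : Matrix n n α) :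
    (fromBlocks X 0 0 X)ᴴ * fromBlocks A B C D * fromBlocks X 0 0 X =
      fromBlocks (Xᴴ * A * X) (Xᴴ * B * X) (Xᴴ * C * X) (Xᴴ * D * X) := by
  simp [fromBlocks_conjTranspose, fromBlocks_multiply, Matrix.mul_assoc]

theorem PosDef.posSemidef_fromBlocks_inv [Fintype n] [DecidableEq n]
    {A : Matrix n n ℂ} (hA : A.PosDef) (K : Matrix n n ℂ) :
    (fromBlocks A K Kᴴ (Kᴴ * A⁻¹ * K)).PosSemidef := by
  have : Invertible A := hA.isUnit.invertible
  rw [PosDef.fromBlocks₁₁ _ _ hA, sub_self]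
  exact PosSemidef.zero

end Matrix

namespace IsCPMap

variable {n m : Type*} [Fintype n] [Fintype m] {Φ : Matrix n n ℂ → Matrix m m ℂ}

theorem map_conjTranspose (hΦ : IsCPMap Φ) (X : Matrix n n ℂ) : Φ Xᴴ = (Φ X)ᴴ := by
  obtain ⟨r, C, hC⟩ := hΦ
  simp [hC, conjTranspose_sum, Matrix.mul_assoc]

theorem posSemidef_fromBlocks_map (hΦ : IsCPMap Φ) {A B C D : Matrix n n ℂ}
    (hM : (fromBlocks A B C D).PosSemidef) :
    (fromBlocks (Φ A) (Φ B) (Φ C) (Φ D)).PosSemidef := by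
  obtain ⟨r, V, hV⟩ := hΦ
  simp only [hV, fromBlocks_sum, ← conjTranspose_mul_fromBlocks_mul_fromBlocks_diag]
  exact posSemidef_sum _ fun i _ => hM.conjTranspose_mul_mul_same _

end IsCPMap

/-- Lieb–Ruskai under a completely positive map. -/
theorem cp_lieb_ruskai {n m : Type*} [Fintype n] [DecidableEq n] [Fintype m] [DecidableEq m]
    (Φ : Matrix n n ℂ → Matrix m m ℂ) (hΦ : IsCPMap Φ)
    (A K : Matrix n n ℂ) (hA : A.PosDef) (hΦA : (Φ A).PosDef) :
    (Φ (Kᴴ * A⁻¹ * K) - (Φ K)ᴴ * (Φ A)⁻¹ * Φ K).PosSemidef := by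
  have : Invertible (Φ A) := hΦA.isUnit.invertible
  have hN := hΦ.posSemidef_fromBlocks_map (hA.posSemidef_fromBlocks_inv K)
  rwa [hΦ.map_conjTranspose, PosDef.fromBlocks₁₁ _ _ hΦA] at hN
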